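/- Let n be a natural number and let t < ρ(n), where ρ(n) is the least i such that the i-th binary digit of n is 0, and assume 2^t ≤ n. Then the binomial coefficient C(n − 2^t, 2^t) is even. -/

import Mathlib

/-! By Lucas' theorem `C(m, 2^t)` has the parity of the `t`-th binary digit of `m`, i.e. of
`m / 2^t`. Since `t < ρ(n)`, the digit `n / 2^t` is odd, so `(n - 2^t) / 2^t = n / 2^t - 1` is even. -/

/-- ρ(n) is the least bit position where `n` has binary digit 0. -/
noncomputable def rho (n : ℕ) : ℕ := sInf {i | n.testBit i = false}

lemma testBit_of_lt_rho {n i : ℕ} (hi : i < rho n) : n.testBit i = true := by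
  simpa using Nat.notMem_of_lt_sInf hi

/-- Lucas' theorem for `k = p ^ t`: all base-`p` digits of `k` but one vanish. -/
lemma choose_prime_pow_modEq_div {p : ℕ} [Fact p.Prime] (m t : ℕ) :
    m.choose (p ^ t) ≡ m / p ^ t [MOD p] := by
  have lucas := Choose.choose_modEq_choose_mul_prod_range_choose (n := m) (k := p ^ t) (p := p) t
  have hp : 0 < p := (Fact.out : p.Prime).pos
  have hdigits : ∀ i ∈ Finset.range t, p ^ t / p ^ i % p = 0 := fun i hi => by
    have hit := Finset.mem_range.mp hi
    rw [Nat.pow_div hit.le hp]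
    exact Nat.mod_eq_zero_of_dvd (dvd_pow_self p (by omega))
  rw [Finset.prod_congr rfl fun i hi => by rw [hdigits i hi, Nat.choose_zero_right],
    Finset.prod_const_one, Nat.div_self (pow_pos hp t), Nat.choose_one_right, Nat.cast_one,
    mul_one] at lucas
  exact Int.natCast_modEq_iff.mp lucas

theorem choose_sub_pow_even (n t : ℕ) (ht : t < rho n) (hle : 2 ^ t ≤ n) :
    Even ((n - 2 ^ t).choose (2 ^ t)) := by
  have hodd : n / 2 ^ t % 2 = 1 := by
    simpa [Nat.testBit_eq_decide_div_mod_eq] using testBit_of_lt_rho ht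
  have hdiv : (n - 2 ^ t) / 2 ^ t = n / 2 ^ t - 1 := by
    simpa using Nat.sub_mul_div n (2 ^ t) 1
  have hpos : 1 ≤ n / 2 ^ t := (Nat.one_le_div_iff (by positivity)).mpr hle
  have hlucas := choose_prime_pow_modEq_div (p := 2) (n - 2 ^ t) t
  rw [hdiv, Nat.ModEq] at hlucas
  rw [Nat.even_iff, hlucas]
  omega
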